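/- Let D be a digraph with vertices {1,...,n}, and let f = ∏_{(v,w) ∈ E(D)} ( Σ_{u ∈ N_D(w) \ N_D(v)} x_u − Σ_{u ∈ N_D(v) \ N_D(w)} x_u ). Then the coefficient of the monomial ∏_{v} x_v^{d⁺_D(v)} in the expansion of f equals EE(W(D)) − EO(W(D)). -/

import Mathlib

open Finset MvPolynomial

/-- Out-degree of `v` in the digraph with arc set `S`. -/
def outDeg {α : Type*} [DecidableEq α] (S : Finset (α × α)) (v : α) : ℕ :=
  (S.filter fun p => p.1 = v).card

/-- In-degree of `v` in the digraph with arc set `S`. -/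
def inDeg {α : Type*} [DecidableEq α] (S : Finset (α × α)) (v : α) : ℕ :=
  (S.filter fun p => p.2 = v).card

/-- A digraph (arc set) is Eulerian if every vertex has equal in- and out-degree. -/
def IsEulerian {α : Type*} [DecidableEq α] (S : Finset (α × α)) : Prop :=
  ∀ v, outDeg S v = inDeg S v

instance {α : Type*} [DecidableEq α] [Fintype α] (S : Finset (α × α)) :
    Decidable (IsEulerian S) := by
  unfold IsEulerian; infer_instance

/-- Number of spanning Eulerian subdigraphs of `H` with an even number of edges. -/
def EE {α : Type*} [DecidableEq α] [Fintype α] (H : Finset (α × α)) : ℕ :=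
  (H.powerset.filter fun S => IsEulerian S ∧ Even S.card).card

/-- Number of spanning Eulerian subdigraphs of `H` with an odd number of edges. -/
def EO {α : Type*} [DecidableEq α] [Fintype α] (H : Finset (α × α)) : ℕ :=
  (H.powerset.filter fun S => IsEulerian S ∧ Odd S.card).card

/-- A digraph `H` contains a directed cycle of length `n`. -/
def HasDicycleLen {α : Type*} (H : Finset (α × α)) (n : ℕ) : Prop :=
  0 < n ∧ ∃ c : ZMod n → α, Function.Injective c ∧ ∀ i, (c i, c (i + 1)) ∈ H

/-- `A` is an orientation of the simple graph `G`. -/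
def IsOrientation {V : Type*} (G : SimpleGraph V) (A : Finset (V × V)) : Prop :=
  (∀ v w, G.Adj v w ↔ ((v, w) ∈ A ∨ (w, v) ∈ A)) ∧
  (∀ v w, (v, w) ∈ A → (w, v) ∉ A)

/-- Neighborhood `N_D(v)` in the digraph with arc set `A` (neighbors in either direction). -/
def nbr {V : Type*} [Fintype V] [DecidableEq V] (A : Finset (V × V)) (v : V) : Finset V :=
  Finset.univ.filter fun x => (v, x) ∈ A ∨ (x, v) ∈ A

/-- Closed neighborhood `N_D[v]`. -/
def nbrC {V : Type*} [Fintype V] [DecidableEq V] (A : Finset (V × V)) (v : V) : Finset V :=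
  insert v (nbr A v)

/-- Vertex type of `W(D)`: starred vertices `x*`, sector vertices `x^{vw}`,
and middle vertices `y^{vw}_x`. -/
abbrev WV (V : Type*) := V ⊕ ((V × V) × V) ⊕ ((V × V) × V)


instance {V : Type*} [DecidableEq V] : DecidableEq (WV V) :=
  inferInstanceAs (DecidableEq (V ⊕ ((V × V) × V) ⊕ ((V × V) × V)))

instance {V : Type*} [Fintype V] [DecidableEq V] : Fintype (WV V) :=
  inferInstanceAs (Fintype (V ⊕ ((V × V) × V) ⊕ ((V × V) × V)))

/-- The starred vertex `x*`. -/
def vstar {V : Type*} (x : V) : WV V := Sum.inl x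

/-- The sector vertex `x^{vw}` (for `e = (v,w)`). -/
def vsec {V : Type*} (e : V × V) (x : V) : WV V := Sum.inr (Sum.inl (e, x))

/-- The middle vertex `y^{vw}_x` (for `e = (v,w)`). -/
def vmid {V : Type*} (e : V × V) (x : V) : WV V := Sum.inr (Sum.inr (e, x))

/-- The set `N_D[v] △ N_D(w)` of possible endpoints of γ-paths through the `vw`-sector. -/
def gammaEnds {V : Type*} [Fintype V] [DecidableEq V] (A : Finset (V × V)) (e : V × V) :
    Finset V :=
  (nbrC A e.1 ∪ nbr A e.2) \ (nbrC A e.1 ∩ nbr A e.2)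

/-- The arc set of the digraph `W(D)` built from the digraph with arc set `A`. -/
def WArcSet {V : Type*} [Fintype V] [DecidableEq V] (A : Finset (V × V)) :
    Finset (WV V × WV V) :=
  (A.image fun e => (vstar e.1, vsec e e.1)) ∪
  (A.biUnion fun e => (nbr A e.1 \ nbr A e.2).image fun x => (vsec e e.1, vsec e x)) ∪
  (A.biUnion fun e => (nbr A e.2 \ nbrC A e.1).image fun x => (vsec e e.1, vmid e x)) ∪
  (A.biUnion fun e => (nbr A e.2 \ nbrC A e.1).image fun x => (vmid e x, vsec e x)) ∪
  (A.biUnion fun e => (gammaEnds A e).image fun x => (vsec e x, vstar x))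

/-- The γ-path `P(v,w;x)` from `v*` through the `vw`-sector to `x*`, as a set of arcs. -/
def gammaPath {V : Type*} [Fintype V] [DecidableEq V] (A : Finset (V × V)) (e : V × V)
    (x : V) : Finset (WV V × WV V) :=
  if x ∈ nbr A e.2 \ nbrC A e.1 then
    {(vstar e.1, vsec e e.1), (vsec e e.1, vmid e x), (vmid e x, vsec e x), (vsec e x, vstar x)}
  else
    {(vstar e.1, vsec e e.1), (vsec e e.1, vsec e x), (vsec e x, vstar x)}

/-- `ℓ` is an additive coloring of `G`. -/
def IsAdditiveColoring {V : Type*} [Fintype V] [DecidableEq V] (G : SimpleGraph V)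
    [DecidableRel G.Adj] (ℓ : V → ℕ) : Prop :=
  ∀ v w, G.Adj v w →
    ∑ u ∈ G.neighborFinset v, ℓ u ≠ ∑ u ∈ G.neighborFinset w, ℓ u

/-!
Expanding the product, a term chooses one variable `x_u` from the factor of every arc
`e = (v, w)`, with sign `-1` exactly when `u ∈ N(v) \ N(w)`. Encode the choice by the subdigraph
of `W(D)` made of the γ-paths `P(v, w; u)` from `v*` to `u*` for all `e` with `u ≠ v`. The path has
3 arcs when `u ∈ N(v) \ N(w)` and 4 arcs when `u ∈ N(w) \ N[v]`, so the sign of the term is `-1`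
to the number of arcs. At `x*` the union has in-degree `#{e | u_e = x ≠ v}` and out-degree
`#{e | v = x ≠ u_e}`, so it is Eulerian exactly when `x` is chosen `d⁺(x)` times, i.e. when the term
contributes to the coefficient of `∏ x_v^{d⁺(v)}`. Conversely an Eulerian subdigraph is such a
union: every sector vertex other than `v^{vw}` has a single in-arc or a single out-arc in `W(D)`,
which propagates an exit arc `x^{vw} → x*` back to a whole γ-path, and `v^{vw}` has in-degree one,
so at most one γ-path leaves it.
-/

theorem MvPolynomial.coeff_prod_sum_C_mul_X {R σ ι : Type*} [CommSemiring R] [Fintype ι]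
    [DecidableEq ι] [DecidableEq σ] (t : ι → Finset σ) (c : ι → σ → R) (d : σ →₀ ℕ) :
    (∏ i, ∑ u ∈ t i, C (c i u) * X u : MvPolynomial σ R).coeff d
      = ∑ p ∈ Fintype.piFinset t with ∑ i, Finsupp.single (p i) 1 = d, ∏ i, c i (p i) := by
  rw [prod_univ_sum, coeff_sum, sum_filter]
  refine sum_congr rfl fun p _ => ?_
  rw [prod_mul_distrib, ← map_prod, coeff_C_mul, prod_congr rfl fun i _ => X.eq_1 (p i),
    ← monomial_sum_one, coeff_monomial]
  split_ifs <;> simp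

theorem EE_sub_EO_eq_sum {R α : Type*} [Ring R] [DecidableEq α] [Fintype α]
    (H : Finset (α × α)) :
    (EE H : R) - EO H = ∑ S ∈ H.powerset with IsEulerian S, (-1) ^ #S := by
  rw [← sum_filter_add_sum_filter_not _ (fun S => Even #S), filter_filter,
    filter_filter, sum_congr rfl fun S hS => (mem_filter.1 hS).2.2.neg_one_pow,
    sum_congr rfl fun S hS => (Nat.not_even_iff_odd.1 (mem_filter.1 hS).2.2).neg_one_pow]
  simp [EE, EO, Nat.not_even_iff_odd, sub_eq_add_neg]

theorem IsEulerian.exists_in_arc {α : Type*} [DecidableEq α] {S : Finset (α × α)}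
    (hS : IsEulerian S) {b : α × α} (hb : b ∈ S) : ∃ c ∈ S, c.2 = b.1 := by
  have : 0 < inDeg S b.1 := hS b.1 ▸ card_pos.2 ⟨b, mem_filter.2 ⟨hb, rfl⟩⟩
  obtain ⟨c, hc⟩ := card_pos.1 this
  exact ⟨c, mem_filter.1 hc⟩

theorem IsEulerian.exists_out_arc {α : Type*} [DecidableEq α] {S : Finset (α × α)}
    (hS : IsEulerian S) {b : α × α} (hb : b ∈ S) : ∃ c ∈ S, c.1 = b.2 := by
  have : 0 < outDeg S b.2 := (hS b.2).symm ▸ card_pos.2 ⟨b, mem_filter.2 ⟨hb, rfl⟩⟩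
  obtain ⟨c, hc⟩ := card_pos.1 this
  exact ⟨c, mem_filter.1 hc⟩

theorem outDeg_biUnion {ι α : Type*} [DecidableEq α] {s : Finset ι} {f : ι → Finset (α × α)}
    (h : (s : Set ι).PairwiseDisjoint f) (v : α) :
    outDeg (s.biUnion f) v = ∑ i ∈ s, outDeg (f i) v := by
  classical
  rw [outDeg, filter_biUnion, card_biUnion (h.mono fun i => filter_subset _ _)]
  rfl

theorem inDeg_biUnion {ι α : Type*} [DecidableEq α] {s : Finset ι} {f : ι → Finset (α × α)}
    (h : (s : Set ι).PairwiseDisjoint f) (v : α) :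
    inDeg (s.biUnion f) v = ∑ i ∈ s, inDeg (f i) v := by
  classical
  rw [inDeg, filter_biUnion, card_biUnion (h.mono fun i => filter_subset _ _)]
  rfl

theorem outDeg_eq_card_filter_coe {α : Type*} [DecidableEq α] (A : Finset (α × α)) (v : α) :
    outDeg A v = #{e : A | e.1.1 = v} := by
  rw [outDeg, card_filter, card_filter, sum_coe_sort A fun e => if e.1 = v then 1 else 0]

section WArcs

variable {V : Type*} [Fintype V] [DecidableEq V] {A : Finset (V × V)} {e : V × V} {x : V}
  {a : WV V × WV V}

-- For `e = (v, w)`, the names `plus`, `minus` and `mid` refer to `N(w) \ N(v)`, `N(v) \ N(w)`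
-- and `N(w) \ N[v]`.

def entryArc (e : V × V) : WV V × WV V := (vstar e.1, vsec e e.1)

def directArc (e : V × V) (x : V) : WV V × WV V := (vsec e e.1, vsec e x)

def midInArc (e : V × V) (x : V) : WV V × WV V := (vsec e e.1, vmid e x)

def midOutArc (e : V × V) (x : V) : WV V × WV V := (vmid e x, vsec e x)

def exitArc (e : V × V) (x : V) : WV V × WV V := (vsec e x, vstar x)

def factorVars (A : Finset (V × V)) (e : V × V) : Finset V :=
  (nbr A e.2 \ nbr A e.1) ∪ (nbr A e.1 \ nbr A e.2)

theorem mem_WArcSet :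
    a ∈ WArcSet A ↔ (∃ e ∈ A, a = entryArc e) ∨
      (∃ e ∈ A, ∃ x ∈ nbr A e.1 \ nbr A e.2, a = directArc e x) ∨
      (∃ e ∈ A, ∃ x ∈ nbr A e.2 \ nbrC A e.1, a = midInArc e x) ∨
      (∃ e ∈ A, ∃ x ∈ nbr A e.2 \ nbrC A e.1, a = midOutArc e x) ∨
      (∃ e ∈ A, ∃ x ∈ gammaEnds A e, a = exitArc e x) := by
  simp only [WArcSet, mem_union, mem_image, mem_biUnion, or_assoc, eq_comm,
    entryArc, directArc, midInArc, midOutArc, exitArc]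

theorem notMem_nbr_self (hs : ∀ v, (v, v) ∉ A) (v : V) : v ∉ nbr A v := by
  simp [nbr, hs]

theorem src_mem_nbr_tgt (he : e ∈ A) : e.1 ∈ nbr A e.2 := by
  simp [nbr, he]

theorem src_notMem_gammaEnds (he : e ∈ A) : e.1 ∉ gammaEnds A e := by
  simp [gammaEnds, nbrC, src_mem_nbr_tgt he]

theorem mem_gammaEnds_of_mem_mid (hx : x ∈ nbr A e.2 \ nbrC A e.1) : x ∈ gammaEnds A e := by
  simp_all [gammaEnds]

theorem mem_gammaEnds_of_mem_minus (hx : x ∈ nbr A e.1 \ nbr A e.2) : x ∈ gammaEnds A e := by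
  simp_all [gammaEnds, nbrC]

theorem ne_src_of_mem_mid (hx : x ∈ nbr A e.2 \ nbrC A e.1) : x ≠ e.1 := by
  rintro rfl; simp [nbrC] at hx

theorem exitArc_mem_WArcSet_iff : exitArc e x ∈ WArcSet A ↔ e ∈ A ∧ x ∈ gammaEnds A e := by
  rw [mem_WArcSet]
  constructor
  · rintro (⟨e', he', h⟩ | ⟨e', he', z, hz, h⟩ | ⟨e', he', z, hz, h⟩ | ⟨e', he', z, hz, h⟩ |
      ⟨e', he', z, hz, h⟩) <;>
      simp_all [entryArc, directArc, midInArc, midOutArc, exitArc, vstar, vsec, vmid]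
  · rintro ⟨he, hx⟩
    exact Or.inr <| Or.inr <| Or.inr <| Or.inr ⟨e, he, x, hx, rfl⟩

theorem eq_entryArc_of_snd_eq (hs : ∀ v, (v, v) ∉ A) (ha : a ∈ WArcSet A)
    (h : a.2 = vsec e e.1) : a = entryArc e := by
  rcases mem_WArcSet.1 ha with ⟨e', he', rfl⟩ | ⟨e', he', z, hz, rfl⟩ | ⟨e', he', z, hz, rfl⟩ |
      ⟨e', he', z, hz, rfl⟩ | ⟨e', he', z, hz, rfl⟩ <;>
    simp_all [entryArc, directArc, midInArc, midOutArc, exitArc, vstar, vsec, vmid, nbrC,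
      notMem_nbr_self hs]

theorem eq_midInArc_of_snd_eq (ha : a ∈ WArcSet A) (h : a.2 = vmid e x) : a = midInArc e x := by
  rcases mem_WArcSet.1 ha with ⟨e', he', rfl⟩ | ⟨e', he', z, hz, rfl⟩ | ⟨e', he', z, hz, rfl⟩ |
      ⟨e', he', z, hz, rfl⟩ | ⟨e', he', z, hz, rfl⟩ <;>
    simp_all [entryArc, directArc, midInArc, midOutArc, exitArc, vstar, vsec, vmid]

theorem eq_midOutArc_of_fst_eq (ha : a ∈ WArcSet A) (h : a.1 = vmid e x) :
    a = midOutArc e x ∧ x ∈ nbr A e.2 \ nbrC A e.1 := by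
  rcases mem_WArcSet.1 ha with ⟨e', he', rfl⟩ | ⟨e', he', z, hz, rfl⟩ | ⟨e', he', z, hz, rfl⟩ |
      ⟨e', he', z, hz, rfl⟩ | ⟨e', he', z, hz, rfl⟩ <;>
    simp_all [entryArc, directArc, midInArc, midOutArc, exitArc, vstar, vsec, vmid]

theorem eq_exitArc_of_fst_eq (ha : a ∈ WArcSet A) (h : a.1 = vsec e x) (hx : x ≠ e.1) :
    a = exitArc e x := by
  rcases mem_WArcSet.1 ha with ⟨e', he', rfl⟩ | ⟨e', he', z, hz, rfl⟩ | ⟨e', he', z, hz, rfl⟩ |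
      ⟨e', he', z, hz, rfl⟩ | ⟨e', he', z, hz, rfl⟩ <;>
    simp_all [entryArc, directArc, midInArc, midOutArc, exitArc, vstar, vsec, vmid] <;> grind

theorem eq_directArc_or_midOutArc_of_snd_eq (ha : a ∈ WArcSet A) (h : a.2 = vsec e x)
    (hx : x ≠ e.1) :
    (a = directArc e x ∧ x ∉ nbr A e.2 \ nbrC A e.1) ∨
      (a = midOutArc e x ∧ x ∈ nbr A e.2 \ nbrC A e.1) := by
  rcases mem_WArcSet.1 ha with ⟨e', he', rfl⟩ | ⟨e', he', z, hz, rfl⟩ | ⟨e', he', z, hz, rfl⟩ |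
      ⟨e', he', z, hz, rfl⟩ | ⟨e', he', z, hz, rfl⟩ <;>
    simp_all [entryArc, directArc, midInArc, midOutArc, exitArc, vstar, vsec, vmid, nbrC]
  grind

theorem exists_snd_eq_of_fst_eq_vsec_src (hs : ∀ v, (v, v) ∉ A) (ha : a ∈ WArcSet A)
    (h : a.1 = vsec e e.1) : ∃ z ≠ e.1, a.2 = vsec e z ∨ a.2 = vmid e z := by
  rcases mem_WArcSet.1 ha with ⟨e', he', rfl⟩ | ⟨e', he', z, hz, rfl⟩ | ⟨e', he', z, hz, rfl⟩ |
      ⟨e', he', z, hz, rfl⟩ | ⟨e', he', z, hz, rfl⟩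
  · simp [entryArc, vstar, vsec] at h
  · simp only [directArc, vsec, Sum.inr.injEq, Sum.inl.injEq, Prod.mk.injEq] at h
    obtain ⟨rfl, -⟩ := h
    exact ⟨z, fun hz' => notMem_nbr_self hs z (hz' ▸ (mem_sdiff.1 hz).1), Or.inl rfl⟩
  · simp only [midInArc, vsec, Sum.inr.injEq, Sum.inl.injEq, Prod.mk.injEq] at h
    obtain ⟨rfl, -⟩ := h
    exact ⟨z, ne_src_of_mem_mid hz, Or.inr rfl⟩
  · simp [midOutArc, vsec, vmid] at h
  · simp only [exitArc, vsec, Sum.inr.injEq, Sum.inl.injEq, Prod.mk.injEq] at h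
    obtain ⟨rfl, rfl⟩ := h
    exact absurd hz (src_notMem_gammaEnds he')

theorem ne_src_of_exitArc_mem (h : exitArc e x ∈ WArcSet A) : x ≠ e.1 := by
  obtain ⟨he, hx⟩ := exitArc_mem_WArcSet_iff.1 h
  rintro rfl
  exact src_notMem_gammaEnds he hx

theorem mem_factorVars_of_mem_gammaEnds (he : e ∈ A) (hx : x ∈ gammaEnds A e) :
    x ∈ factorVars A e := by
  have := src_mem_nbr_tgt he
  simp only [gammaEnds, factorVars, nbrC, mem_union, mem_sdiff, mem_inter,
    mem_insert] at hx ⊢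
  grind

theorem src_mem_factorVars (hs : ∀ v, (v, v) ∉ A) (he : e ∈ A) : e.1 ∈ factorVars A e :=
  mem_union_left _ (mem_sdiff.2 ⟨src_mem_nbr_tgt he, notMem_nbr_self hs _⟩)

end WArcs

section GammaPaths

variable {V : Type*} [Fintype V] [DecidableEq V] {A : Finset (V × V)} {e e' : V × V} {x y : V}

theorem gammaPath_of_mem (hx : x ∈ nbr A e.2 \ nbrC A e.1) :
    gammaPath A e x = {entryArc e, midInArc e x, midOutArc e x, exitArc e x} :=
  if_pos hx

theorem gammaPath_of_notMem (hx : x ∉ nbr A e.2 \ nbrC A e.1) :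
    gammaPath A e x = {entryArc e, directArc e x, exitArc e x} :=
  if_neg hx

theorem entryArc_mem_gammaPath : entryArc e ∈ gammaPath A e x := by
  unfold gammaPath; split_ifs <;> simp [entryArc]

theorem exitArc_mem_gammaPath_iff : exitArc e x ∈ gammaPath A e' y ↔ e' = e ∧ y = x := by
  unfold gammaPath
  split_ifs <;> simp [exitArc, vstar, vsec, vmid] <;> grind

theorem disjoint_gammaPath (h : e ≠ e') : Disjoint (gammaPath A e x) (gammaPath A e' y) := by
  unfold gammaPath
  split_ifs <;> simp [vstar, vsec, vmid] <;> grind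

theorem card_gammaPath (hx : x ≠ e.1) :
    #(gammaPath A e x) = if x ∈ nbr A e.2 \ nbrC A e.1 then 4 else 3 := by
  unfold gammaPath
  split_ifs <;> simp [vstar, vsec, vmid, Ne.symm hx]

theorem outDeg_add_gammaPath (hx : x ≠ e.1) (w : WV V) :
    outDeg (gammaPath A e x) w + (if w = vstar x then 1 else 0)
      = inDeg (gammaPath A e x) w + (if w = vstar e.1 then 1 else 0) := by
  have hx' := Ne.symm hx
  unfold gammaPath outDeg inDeg
  split_ifs <;> simp only [card_filter] <;>
    simp (disch := simp [vstar, vsec, vmid, hx, hx']) only [sum_insert,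
      sum_singleton] <;>
    simp_all only [vstar, vsec, vmid] <;> grind

/-- The arcs of `W(D)` that encode choosing the variable `X x` from the factor of `e`. -/
def sectorArcs (A : Finset (V × V)) (e : V × V) (x : V) : Finset (WV V × WV V) :=
  if x = e.1 then ∅ else gammaPath A e x

theorem outDeg_add_sectorArcs (w : WV V) :
    outDeg (sectorArcs A e x) w + (if w = vstar x then 1 else 0)
      = inDeg (sectorArcs A e x) w + (if w = vstar e.1 then 1 else 0) := by
  by_cases hx : x = e.1
  · subst hx; simp [sectorArcs, outDeg, inDeg]
  · rw [sectorArcs, if_neg hx]; exact outDeg_add_gammaPath hx w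

theorem neg_one_pow_card_sectorArcs_of_mem_plus {R : Type*} [Monoid R] [HasDistribNeg R]
    (hx : x ∈ nbr A e.2 \ nbr A e.1) : (-1 : R) ^ #(sectorArcs A e x) = 1 := by
  unfold sectorArcs
  split_ifs with h
  · simp
  · have hmid : x ∈ nbr A e.2 \ nbrC A e.1 := by simp_all [nbrC]
    simp [card_gammaPath h, hmid, Even.neg_one_pow ⟨2, rfl⟩]

theorem neg_one_pow_card_sectorArcs_of_mem_minus {R : Type*} [Monoid R] [HasDistribNeg R]
    (hs : ∀ v, (v, v) ∉ A) (hx : x ∈ nbr A e.1 \ nbr A e.2) :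
    (-1 : R) ^ #(sectorArcs A e x) = -1 := by
  have h : x ≠ e.1 := by rintro rfl; exact notMem_nbr_self hs _ (mem_sdiff.1 hx).1
  have hmid : x ∉ nbr A e.2 \ nbrC A e.1 := by simp_all
  simp [sectorArcs, h, card_gammaPath h, hmid, pow_succ]

theorem factor_eq_sum_C_mul_X {R : Type*} [CommRing R] (hs : ∀ v, (v, v) ∉ A) (e : V × V) :
    ((∑ u ∈ nbr A e.2 \ nbr A e.1, X u) - ∑ u ∈ nbr A e.1 \ nbr A e.2, X u : MvPolynomial V R)
      = ∑ u ∈ factorVars A e, C ((-1) ^ #(sectorArcs A e u)) * X u := by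
  rw [factorVars, sum_union disjoint_sdiff_sdiff, sub_eq_add_neg,
    ← sum_neg_distrib]
  congr 1 <;> refine sum_congr rfl fun u hu => ?_
  · rw [neg_one_pow_card_sectorArcs_of_mem_plus hu, C_1, one_mul]
  · rw [neg_one_pow_card_sectorArcs_of_mem_minus hs hu, C_neg, C_1, neg_one_mul]

end GammaPaths

section PathUnion

variable {V : Type*} [Fintype V] [DecidableEq V] {A : Finset (V × V)} {e : V × V} {x : V}
  {a : WV V × WV V} {p : A → V}

theorem gammaPath_subset_WArcSet (he : e ∈ A) (hx : x ∈ factorVars A e) (hne : x ≠ e.1) :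
    gammaPath A e x ⊆ WArcSet A := by
  intro a ha
  rw [mem_WArcSet]
  by_cases hmid : x ∈ nbr A e.2 \ nbrC A e.1
  · rw [gammaPath_of_mem hmid] at ha
    simp only [mem_insert, mem_singleton] at ha
    rcases ha with rfl | rfl | rfl | rfl
    · exact Or.inl ⟨e, he, rfl⟩
    · exact Or.inr <| Or.inr <| Or.inl ⟨e, he, x, hmid, rfl⟩
    · exact Or.inr <| Or.inr <| Or.inr <| Or.inl ⟨e, he, x, hmid, rfl⟩
    · exact Or.inr <| Or.inr <| Or.inr <| Or.inr ⟨e, he, x, mem_gammaEnds_of_mem_mid hmid, rfl⟩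
  · have hminus : x ∈ nbr A e.1 \ nbr A e.2 := by
      simp only [factorVars, nbrC, mem_union, mem_sdiff, mem_insert] at hx hmid ⊢
      tauto
    rw [gammaPath_of_notMem hmid] at ha
    simp only [mem_insert, mem_singleton] at ha
    rcases ha with rfl | rfl | rfl
    · exact Or.inl ⟨e, he, rfl⟩
    · exact Or.inr <| Or.inl ⟨e, he, x, hminus, rfl⟩
    · exact Or.inr <| Or.inr <| Or.inr <| Or.inr ⟨e, he, x, mem_gammaEnds_of_mem_minus hminus, rfl⟩

def pathUnion (A : Finset (V × V)) (p : A → V) : Finset (WV V × WV V) :=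
  univ.biUnion fun e : A => sectorArcs A e (p e)

theorem pairwiseDisjoint_sectorArcs (p : A → V) :
    ((univ : Finset A) : Set A).PairwiseDisjoint fun e => sectorArcs A e (p e) := by
  intro e _ e' _ h
  simp only [Function.onFun, sectorArcs]
  split_ifs <;> simp [disjoint_gammaPath (Subtype.coe_injective.ne h)]

theorem mem_pathUnion : a ∈ pathUnion A p ↔ ∃ e : A, p e ≠ e.1.1 ∧ a ∈ gammaPath A e (p e) := by
  simp only [pathUnion, mem_biUnion, mem_univ, true_and, sectorArcs]
  refine exists_congr fun e => ?_
  split_ifs with h <;> simp [h]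

theorem exitArc_mem_pathUnion_iff (e : A) : exitArc e x ∈ pathUnion A p ↔ p e = x ∧ x ≠ e.1.1 := by
  rw [mem_pathUnion]
  constructor
  · rintro ⟨e', hne, h⟩
    obtain ⟨he, rfl⟩ := exitArc_mem_gammaPath_iff.1 h
    obtain rfl := Subtype.ext he
    exact ⟨rfl, hne⟩
  · rintro ⟨rfl, hne⟩
    exact ⟨e, hne, exitArc_mem_gammaPath_iff.2 ⟨rfl, rfl⟩⟩

theorem pathUnion_injective : Function.Injective (pathUnion A) := by
  have key : ∀ p q : A → V, pathUnion A p = pathUnion A q → ∀ e, p e ≠ e.1.1 → q e = p e :=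
    fun p q h e hp =>
      ((exitArc_mem_pathUnion_iff e).1 (h ▸ (exitArc_mem_pathUnion_iff e).2 ⟨rfl, hp⟩)).1
  intro p q h
  funext e
  by_cases hp : p e = e.1.1
  · by_cases hq : q e = e.1.1
    · rw [hp, hq]
    · exact key q p h.symm e hq
  · exact (key p q h e hp).symm

theorem pathUnion_subset_WArcSet (hp : ∀ e : A, p e ∈ factorVars A e) :
    pathUnion A p ⊆ WArcSet A := by
  intro a ha
  obtain ⟨e, hne, ha⟩ := mem_pathUnion.1 ha
  exact gammaPath_subset_WArcSet e.2 (hp e) hne ha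

theorem neg_one_pow_card_pathUnion {R : Type*} [CommMonoid R] [HasDistribNeg R] (p : A → V) :
    (-1 : R) ^ #(pathUnion A p) = ∏ e : A, (-1) ^ #(sectorArcs A e (p e)) := by
  rw [pathUnion, card_biUnion (pairwiseDisjoint_sectorArcs p), prod_pow_eq_pow_sum]

theorem outDeg_pathUnion_add (p : A → V) (w : WV V) :
    outDeg (pathUnion A p) w + #{e | w = vstar (p e)}
      = inDeg (pathUnion A p) w + #{e : A | w = vstar e.1.1} := by
  rw [pathUnion, outDeg_biUnion (pairwiseDisjoint_sectorArcs p),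
    inDeg_biUnion (pairwiseDisjoint_sectorArcs p), card_filter, card_filter,
    ← sum_add_distrib, ← sum_add_distrib]
  exact sum_congr rfl fun e _ => outDeg_add_sectorArcs w

theorem isEulerian_pathUnion_iff :
    IsEulerian (pathUnion A p) ↔ ∀ v, #{e | p e = v} = #{e : A | e.1.1 = v} := by
  constructor
  · intro h v
    have := outDeg_pathUnion_add p (vstar v)
    rw [h] at this
    simpa [vstar, eq_comm] using this
  · intro h w
    have := outDeg_pathUnion_add p w
    suffices #{e | w = vstar (p e)} = #{e : A | w = vstar e.1.1} by omega
    rcases w with v | _ | _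
    · simpa [vstar, eq_comm] using h v
    · simp [vstar]
    · simp [vstar]

theorem sum_single_eq_outDeg_iff (p : A → V) :
    ∑ e, Finsupp.single (p e) 1 = Finsupp.equivFunOnFinite.symm (fun v => outDeg A v) ↔
      ∀ v, #{e | p e = v} = #{e : A | e.1.1 = v} := by
  rw [Finsupp.ext_iff]
  refine forall_congr' fun v => ?_
  rw [Finsupp.finsetSum_apply, Finsupp.equivFunOnFinite_symm_apply_apply, outDeg_eq_card_filter_coe,
    card_filter]
  simp [Finsupp.single_apply]

end PathUnion

section EulerianSubdigraphs

variable {V : Type*} [Fintype V] [DecidableEq V] {A : Finset (V × V)}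
  {S : Finset (WV V × WV V)} {e : V × V} {x y : V} {a b : WV V × WV V}

theorem entryArc_mem_of_fst_eq (hs : ∀ v, (v, v) ∉ A) (hsub : S ⊆ WArcSet A)
    (hS : IsEulerian S) (hb : b ∈ S) (h : b.1 = vsec e e.1) : entryArc e ∈ S := by
  obtain ⟨c, hc, hc2⟩ := hS.exists_in_arc hb
  rwa [← eq_entryArc_of_snd_eq hs (hsub hc) (hc2.trans h)]

theorem exitArc_mem_of_snd_eq_vsec (hsub : S ⊆ WArcSet A) (hS : IsEulerian S) (hb : b ∈ S)
    (h : b.2 = vsec e x) (hx : x ≠ e.1) : exitArc e x ∈ S := by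
  obtain ⟨c, hc, hc1⟩ := hS.exists_out_arc hb
  rwa [← eq_exitArc_of_fst_eq (hsub hc) (hc1.trans h) hx]

theorem exitArc_mem_of_snd_eq_vmid (hsub : S ⊆ WArcSet A) (hS : IsEulerian S) (hb : b ∈ S)
    (h : b.2 = vmid e x) : exitArc e x ∈ S := by
  obtain ⟨c, hc, hc1⟩ := hS.exists_out_arc hb
  obtain ⟨rfl, hx⟩ := eq_midOutArc_of_fst_eq (hsub hc) (hc1.trans h)
  exact exitArc_mem_of_snd_eq_vsec hsub hS hc rfl (ne_src_of_mem_mid hx)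

theorem gammaPath_subset_of_exitArc_mem (hs : ∀ v, (v, v) ∉ A) (hsub : S ⊆ WArcSet A)
    (hS : IsEulerian S) (h : exitArc e x ∈ S) : gammaPath A e x ⊆ S := by
  obtain ⟨b, hb, hb2⟩ := hS.exists_in_arc h
  rcases eq_directArc_or_midOutArc_of_snd_eq (hsub hb) hb2 (ne_src_of_exitArc_mem (hsub h))
    with ⟨rfl, hmid⟩ | ⟨rfl, hmid⟩
  · have hentry := entryArc_mem_of_fst_eq hs hsub hS hb rfl
    rw [gammaPath_of_notMem hmid]
    simp [insert_subset_iff, *]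
  · obtain ⟨c, hc, hc2⟩ := hS.exists_in_arc hb
    obtain rfl := eq_midInArc_of_snd_eq (hsub hc) hc2
    have hentry := entryArc_mem_of_fst_eq hs hsub hS hc rfl
    rw [gammaPath_of_mem hmid]
    simp [insert_subset_iff, *]

theorem exists_exitArc_mem_of_mem (hs : ∀ v, (v, v) ∉ A) (hsub : S ⊆ WArcSet A)
    (hS : IsEulerian S) (ha : a ∈ S) : ∃ e ∈ A, ∃ x, exitArc e x ∈ S ∧ a ∈ gammaPath A e x := by
  rcases mem_WArcSet.1 (hsub ha) with ⟨e, he, rfl⟩ | ⟨e, he, x, hx, rfl⟩ |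
      ⟨e, he, x, hx, rfl⟩ | ⟨e, he, x, hx, rfl⟩ | ⟨e, he, x, hx, rfl⟩
  · obtain ⟨b, hb, hb1⟩ := hS.exists_out_arc ha
    obtain ⟨z, hz, h | h⟩ := exists_snd_eq_of_fst_eq_vsec_src hs (hsub hb) hb1
    · exact ⟨e, he, z, exitArc_mem_of_snd_eq_vsec hsub hS hb h hz, entryArc_mem_gammaPath⟩
    · exact ⟨e, he, z, exitArc_mem_of_snd_eq_vmid hsub hS hb h, entryArc_mem_gammaPath⟩
  · have hne : x ≠ e.1 := by rintro rfl; exact notMem_nbr_self hs _ (mem_sdiff.1 hx).1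
    have hmid : x ∉ nbr A e.2 \ nbrC A e.1 := by simp_all [nbrC]
    refine ⟨e, he, x, exitArc_mem_of_snd_eq_vsec hsub hS ha rfl hne, ?_⟩
    simp [gammaPath_of_notMem hmid]
  · exact ⟨e, he, x, exitArc_mem_of_snd_eq_vmid hsub hS ha rfl, by simp [gammaPath_of_mem hx]⟩
  · refine ⟨e, he, x, exitArc_mem_of_snd_eq_vsec hsub hS ha rfl (ne_src_of_mem_mid hx), ?_⟩
    simp [gammaPath_of_mem hx]
  · exact ⟨e, he, x, ha, exitArc_mem_gammaPath_iff.2 ⟨rfl, rfl⟩⟩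

theorem exists_fst_eq_mem_gammaPath (A : Finset (V × V)) (e : V × V) (x : V) :
    ∃ b ∈ gammaPath A e x, b.1 = vsec e e.1 ∧ (b.2 = vsec e x ∨ b.2 = vmid e x) := by
  by_cases hmid : x ∈ nbr A e.2 \ nbrC A e.1
  · exact ⟨midInArc e x, by simp [gammaPath_of_mem hmid], rfl, Or.inr rfl⟩
  · exact ⟨directArc e x, by simp [gammaPath_of_notMem hmid], rfl, Or.inl rfl⟩

theorem outDeg_vsec_src_le_one (hs : ∀ v, (v, v) ∉ A) (hsub : S ⊆ WArcSet A)
    (hS : IsEulerian S) : outDeg S (vsec e e.1) ≤ 1 := by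
  rw [hS, inDeg]
  refine card_le_one.2 fun b hb c hc => ?_
  rw [mem_filter] at hb hc
  rw [eq_entryArc_of_snd_eq hs (hsub hb.1) hb.2, eq_entryArc_of_snd_eq hs (hsub hc.1) hc.2]

theorem eq_of_exitArc_mem (hs : ∀ v, (v, v) ∉ A) (hsub : S ⊆ WArcSet A) (hS : IsEulerian S)
    (hx : exitArc e x ∈ S) (hy : exitArc e y ∈ S) : x = y := by
  obtain ⟨b, hb, hb1, hb2⟩ := exists_fst_eq_mem_gammaPath A e x
  obtain ⟨c, hc, hc1, hc2⟩ := exists_fst_eq_mem_gammaPath A e y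
  obtain rfl : b = c := card_le_one.1 (outDeg_vsec_src_le_one hs hsub hS) b
    (mem_filter.2 ⟨gammaPath_subset_of_exitArc_mem hs hsub hS hx hb, hb1⟩) c
    (mem_filter.2 ⟨gammaPath_subset_of_exitArc_mem hs hsub hS hy hc, hc1⟩)
  rcases hb2 with h | h <;> rcases hc2 with h' | h' <;> simp_all [vsec, vmid]

theorem exists_pathUnion_eq (hs : ∀ v, (v, v) ∉ A) (hsub : S ⊆ WArcSet A) (hS : IsEulerian S) :
    ∃ p : A → V, (∀ e : A, p e ∈ factorVars A e) ∧ pathUnion A p = S := by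
  classical
  let p : A → V := fun e => if h : ∃ x, exitArc e.1 x ∈ S then h.choose else e.1.1
  have hp_eq : ∀ (e : A) x, exitArc e.1 x ∈ S → p e = x := fun e x hx => by
    have h : ∃ x, exitArc e.1 x ∈ S := ⟨x, hx⟩
    simp only [p, dif_pos h]
    exact eq_of_exitArc_mem hs hsub hS h.choose_spec hx
  have hp_mem : ∀ e : A, p e ≠ e.1.1 → exitArc e.1 (p e) ∈ S := fun e hne => by
    by_cases h : ∃ x, exitArc e.1 x ∈ S
    · obtain ⟨x, hx⟩ := h
      rwa [hp_eq e x hx]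
    · simp only [p, dif_neg h] at hne
      exact absurd rfl hne
  refine ⟨p, fun e => ?_, ?_⟩
  · by_cases hne : p e = e.1.1
    · rw [hne]
      exact src_mem_factorVars hs e.2
    · exact mem_factorVars_of_mem_gammaEnds e.2 (exitArc_mem_WArcSet_iff.1 (hsub (hp_mem e hne))).2
  · ext a
    rw [mem_pathUnion]
    constructor
    · rintro ⟨e, hne, ha⟩
      exact gammaPath_subset_of_exitArc_mem hs hsub hS (hp_mem e hne) ha
    · intro ha
      obtain ⟨e, he, x, hx, hax⟩ := exists_exitArc_mem_of_mem hs hsub hS ha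
      obtain rfl := hp_eq ⟨e, he⟩ x hx
      exact ⟨⟨e, he⟩, ne_src_of_exitArc_mem (hsub hx), hax⟩

end EulerianSubdigraphs

/-- The coefficient of `∏ x_v^{d⁺(v)}` in
`∏_{(v,w)∈E(D)} (Σ_{u ∈ N(w)\N(v)} x_u − Σ_{u ∈ N(v)\N(w)} x_u)`
equals `EE(W(D)) − EO(W(D))`. -/
theorem coeff_eq_EE_sub_EO_of_W {V : Type*} [Fintype V] [DecidableEq V]
    (A : Finset (V × V)) (hsimple : ∀ v, (v, v) ∉ A) :
    (∏ e ∈ A,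
        ((∑ u ∈ nbr A e.2 \ nbr A e.1, MvPolynomial.X u)
          - ∑ u ∈ nbr A e.1 \ nbr A e.2, MvPolynomial.X u : MvPolynomial V ℝ)).coeff
        (Finsupp.equivFunOnFinite.symm fun v => outDeg A v)
      = (EE (WArcSet A) : ℝ) - (EO (WArcSet A) : ℝ) := by
  rw [← prod_coe_sort A, prod_congr rfl fun e _ => factor_eq_sum_C_mul_X hsimple e.1,
    MvPolynomial.coeff_prod_sum_C_mul_X, EE_sub_EO_eq_sum]
  refine sum_bij (fun p _ => pathUnion A p) (fun p hp => ?_)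
    (fun p _ q _ h => pathUnion_injective h) (fun S hS => ?_) (fun p _ => ?_)
  · rw [mem_filter, Fintype.mem_piFinset, sum_single_eq_outDeg_iff] at hp
    exact mem_filter.2
      ⟨mem_powerset.2 (pathUnion_subset_WArcSet hp.1), isEulerian_pathUnion_iff.2 hp.2⟩
  · rw [mem_filter, mem_powerset] at hS
    obtain ⟨p, hp, rfl⟩ := exists_pathUnion_eq hsimple hS.1 hS.2
    exact ⟨p, mem_filter.2 ⟨Fintype.mem_piFinset.2 hp,
      (sum_single_eq_outDeg_iff p).2 (isEulerian_pathUnion_iff.1 hS.2)⟩, rfl⟩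
  · exact (neg_one_pow_card_pathUnion p).symm
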